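/- Let β ∈ (1,2) with β^m = β^{m−1}+⋯+β+1 for an integer m ≥ 2, b ∈ [0, 1/(β−1) − 1), and T the piecewise map with branches T_0, T_1 and breakpoint (b+1)/β. The density h(x) = Σ_{n=0}^{m−1} β^{−n}(𝟙_{[0,T^n(b+1)]}(x) − 𝟙_{[0,T^n(b)]}(x)) satisfies ∫_0^{(b+1)/β} h dx = 1 − (m−1)b and ∫_0^{1/(β−1)} h dx = (mβ + β − 2m)/(β − 1), so that the normalized measure gives mass p = (β−1)(1−(m−1)b)/(mβ+β−2m) to [0,(b+1)/β). -/

import Mathlib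

/-!
For `n < m` the orbit of `b` stays on the left branch and the orbit of `b + 1` on the right
branch, so `Tⁿ b = βⁿ b` and `Tⁿ (b + 1) = 1/(β-1) + βⁿ (b + 1 - 1/(β-1))`; both facts reduce to
`βᵏ (2 - β) ≤ 1` for `k ≤ m`, a consequence of the pseudo-golden relation `βᵐ (2 - β) = 1`.
Integrating `h` over `[0, c]` gives `∑ₙ (min (Tⁿ (b + 1)) c - min (Tⁿ b) c) / βⁿ`, and for
both endpoints the minima are explicit; the sums then collapse by `∑_{n<m} β⁻ⁿ = β`.
-/

open Finset MeasureTheory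

theorem pow_mul_two_sub_eq_one_of_pow_eq_geom_sum {R : Type*} [CommRing R] {x : R} {m : ℕ}
    (hx : x ^ m = ∑ i ∈ range m, x ^ i) : x ^ m * (2 - x) = 1 := by
  linear_combination -(geom_sum_mul x m) - (x - 1) * hx

theorem sum_range_inv_pow_eq_self_of_pow_eq_geom_sum {β : ℝ} {m : ℕ} (hβ : 1 < β)
    (hpg : β ^ m = ∑ i ∈ range m, β ^ i) : ∑ n ∈ range m, β⁻¹ ^ n = β := by
  have hβm : β⁻¹ ^ m = 2 - β := by
    rw [inv_pow, inv_eq_of_mul_eq_one_right (pow_mul_two_sub_eq_one_of_pow_eq_geom_sum hpg)]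
  rw [geom_sum_inv hβ.ne' (by positivity), hβm]
  field_simp [sub_ne_zero.2 hβ.ne']
  ring

theorem iterate_eq_pow_mul_of_forall_lt {T : ℝ → ℝ} {β c x : ℝ}
    (hT : ∀ y < c, T y = β * y) :
    ∀ {k : ℕ}, (∀ n < k, β ^ n * x < c) → T^[k] x = β ^ k * x
  | 0, _ => by simp
  | k + 1, hx => by
    rw [Function.iterate_succ_apply',
      iterate_eq_pow_mul_of_forall_lt hT fun n hn => hx n (by omega), hT _ (hx k k.lt_succ_self),
      pow_succ]
    ring

/-- `1 / (β - 1)` is the fixed point of `y ↦ β * y - 1`, which expands distances to it by `β`. -/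
theorem iterate_eq_add_pow_mul_of_forall_le {T : ℝ → ℝ} {β c x : ℝ} (hβ : β ≠ 1)
    (hT : ∀ y, c ≤ y → T y = β * y - 1) :
    ∀ {k : ℕ}, (∀ n < k, c ≤ 1 / (β - 1) + β ^ n * (x - 1 / (β - 1))) →
      T^[k] x = 1 / (β - 1) + β ^ k * (x - 1 / (β - 1))
  | 0, _ => by simp
  | k + 1, hx => by
    rw [Function.iterate_succ_apply',
      iterate_eq_add_pow_mul_of_forall_le hβ hT fun n hn => hx n (by omega),
      hT _ (hx k k.lt_succ_self)]
    field_simp [sub_ne_zero.2 hβ]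
    ring

theorem intervalIntegral_indicator_Icc_zero_one {a c : ℝ} (ha : 0 ≤ a) (hc : 0 ≤ c) :
    ∫ x in (0 : ℝ)..c, (Set.Icc 0 a).indicator (fun _ => (1 : ℝ)) x = min a c := by
  have hset : Set.Ioc 0 c ∩ Set.Icc 0 a = Set.Ioc 0 (min a c) := by
    ext x
    simp only [Set.mem_inter_iff, Set.mem_Ioc, Set.mem_Icc, le_min_iff]
    constructor
    · rintro ⟨⟨hx0, hxc⟩, -, hxa⟩
      exact ⟨hx0, hxa, hxc⟩
    · rintro ⟨hx0, hxa, hxc⟩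
      exact ⟨⟨hx0, hxc⟩, hx0.le, hxa⟩
  rw [intervalIntegral.integral_of_le hc, setIntegral_indicator measurableSet_Icc, hset,
    setIntegral_const]
  simp [le_min ha hc]

theorem intervalIntegrable_indicator_Icc_one (a x y : ℝ) :
    IntervalIntegrable ((Set.Icc (0 : ℝ) a).indicator fun _ => (1 : ℝ)) volume x y :=
  ((integrable_indicator_iff measurableSet_Icc).2
    (integrableOn_const measure_Icc_lt_top.ne)).intervalIntegrable

theorem intervalIntegral_sum_indicator_Icc_sub {ι : Type*} (s : Finset ι) (u v w : ι → ℝ)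
    (hu : ∀ i ∈ s, 0 ≤ u i) (hv : ∀ i ∈ s, 0 ≤ v i) {c : ℝ} (hc : 0 ≤ c) :
    ∫ x in (0 : ℝ)..c, ∑ i ∈ s, ((Set.Icc 0 (u i)).indicator (fun _ => (1 : ℝ)) x -
        (Set.Icc 0 (v i)).indicator (fun _ => (1 : ℝ)) x) / w i =
      ∑ i ∈ s, (min (u i) c - min (v i) c) / w i := by
  rw [intervalIntegral.integral_finsetSum fun i _ =>
    ((intervalIntegrable_indicator_Icc_one _ _ _).sub
      (intervalIntegrable_indicator_Icc_one _ _ _)).div_const _]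
  refine sum_congr rfl fun i hi => ?_
  rw [intervalIntegral.integral_div, intervalIntegral.integral_sub
    (intervalIntegrable_indicator_Icc_one _ _ _) (intervalIntegrable_indicator_Icc_one _ _ _),
    intervalIntegral_indicator_Icc_zero_one (hu i hi) hc,
    intervalIntegral_indicator_Icc_zero_one (hv i hi) hc]

section PseudoGolden

variable {β b : ℝ} {m : ℕ}

theorem two_sub_pos_of_pow_mul_eq_one (hβ : 0 < β) (hpg : β ^ m * (2 - β) = 1) : 0 < 2 - β :=
  pos_of_mul_pos_right (hpg ▸ one_pos) (by positivity)

theorem pow_mul_two_sub_le_one {k : ℕ} (hβ : 1 < β) (hpg : β ^ m * (2 - β) = 1) (hk : k ≤ m) :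
    β ^ k * (2 - β) ≤ 1 :=
  hpg ▸ mul_le_mul_of_nonneg_right (pow_le_pow_right₀ hβ.le hk)
    (two_sub_pos_of_pow_mul_eq_one (zero_lt_one.trans hβ) hpg).le

theorem pow_mul_lt_div_of_lt {n : ℕ} (hβ : 1 < β) (hpg : β ^ m * (2 - β) = 1)
    (hb0 : 0 ≤ b) (hb : (b + 1) * (β - 1) < 1) (hn : n < m) : β ^ n * b < (b + 1) / β := by
  have h : β ^ (n + 1) * (2 - β) ≤ 1 := pow_mul_two_sub_le_one hβ hpg hn
  have hb' : b * (β - 1) < 2 - β := by linarith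
  rw [lt_div_iff₀ (by positivity), mul_right_comm, ← pow_succ]
  nlinarith [mul_le_mul_of_nonneg_left h hb0,
    mul_lt_mul_of_pos_right hb' (by positivity : 0 < β ^ (n + 1))]

theorem div_le_add_pow_mul_of_lt {n : ℕ} (hβ : 1 < β) (hpg : β ^ m * (2 - β) = 1)
    (hb0 : 0 ≤ b) (hb : (b + 1) * (β - 1) < 1) (hn : n < m) :
    (b + 1) / β ≤ 1 / (β - 1) + β ^ n * (b + 1 - 1 / (β - 1)) := by
  have h : β ^ (n + 1) * (2 - β) ≤ 1 := pow_mul_two_sub_le_one hβ hpg hn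
  have h1 : 0 < β - 1 := by linarith
  set e := 1 - (b + 1) * (β - 1)
  have key : β ^ (n + 1) * e ≤ β - 1 + e := by
    refine le_of_mul_le_mul_right ?_ (two_sub_pos_of_pow_mul_eq_one (zero_lt_one.trans hβ) hpg)
    nlinarith [mul_le_mul_of_nonneg_left h (by linarith : 0 ≤ e),
      mul_nonneg h1.le (mul_nonneg hb0 h1.le)]
  rw [div_le_iff₀ (by positivity)]
  field_simp
  rw [pow_succ] at key
  nlinarith

theorem sum_range_min_div_pow_breakpoint (hβ : 1 < β) (hpg : β ^ m = ∑ i ∈ range m, β ^ i)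
    (hb0 : 0 ≤ b) (hb : (b + 1) * (β - 1) < 1) :
    ∑ n ∈ range m, (min (1 / (β - 1) + β ^ n * (b + 1 - 1 / (β - 1))) ((b + 1) / β) -
      min (β ^ n * b) ((b + 1) / β)) / β ^ n = 1 - ((m : ℝ) - 1) * b := by
  have hβm := pow_mul_two_sub_eq_one_of_pow_eq_geom_sum hpg
  have hterm : ∀ n ∈ range m, (min (1 / (β - 1) + β ^ n * (b + 1 - 1 / (β - 1))) ((b + 1) / β) -
      min (β ^ n * b) ((b + 1) / β)) / β ^ n = (b + 1) / β * β⁻¹ ^ n - b := by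
    intro n hn
    rw [min_eq_right (div_le_add_pow_mul_of_lt hβ hβm hb0 hb (mem_range.1 hn)),
      min_eq_left (pow_mul_lt_div_of_lt hβ hβm hb0 hb (mem_range.1 hn)).le, inv_pow]
    field_simp
  rw [sum_congr rfl hterm, sum_sub_distrib, ← mul_sum,
    sum_range_inv_pow_eq_self_of_pow_eq_geom_sum hβ hpg, sum_const, card_range, nsmul_eq_mul]
  field_simp
  ring

theorem sum_range_min_div_pow_fixedPoint (hβ : 1 < β) (hpg : β ^ m = ∑ i ∈ range m, β ^ i)
    (hb0 : 0 ≤ b) (hb : (b + 1) * (β - 1) < 1) :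
    ∑ n ∈ range m, (min (1 / (β - 1) + β ^ n * (b + 1 - 1 / (β - 1))) (1 / (β - 1)) -
      min (β ^ n * b) (1 / (β - 1))) / β ^ n = ((m : ℝ) * β + β - 2 * m) / (β - 1) := by
  have hβm := pow_mul_two_sub_eq_one_of_pow_eq_geom_sum hpg
  have hβ1 : 0 < β - 1 := by linarith
  have hbp : b + 1 - 1 / (β - 1) < 0 := by
    rw [sub_neg, lt_div_iff₀ hβ1]
    exact hb
  have hterm : ∀ n ∈ range m, (min (1 / (β - 1) + β ^ n * (b + 1 - 1 / (β - 1))) (1 / (β - 1)) -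
      min (β ^ n * b) (1 / (β - 1))) / β ^ n = 1 / (β - 1) * β⁻¹ ^ n + (1 - 1 / (β - 1)) := by
    intro n hn
    have hlow := pow_mul_lt_div_of_lt hβ hβm hb0 hb (mem_range.1 hn)
    have hup := div_le_add_pow_mul_of_lt hβ hβm hb0 hb (mem_range.1 hn)
    have hneg : β ^ n * (b + 1 - 1 / (β - 1)) ≤ 0 :=
      mul_nonpos_of_nonneg_of_nonpos (by positivity) hbp.le
    rw [min_eq_left (by linarith), min_eq_left (by linarith), inv_pow]
    field_simp
    ring
  rw [sum_congr rfl hterm, sum_add_distrib, ← mul_sum,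
    sum_range_inv_pow_eq_self_of_pow_eq_geom_sum hβ hpg, sum_const, card_range, nsmul_eq_mul]
  field_simp
  ring

end PseudoGolden

theorem stmt18_general (β : ℝ) (m : ℕ) (hβ : β ∈ Set.Ioo (1 : ℝ) 2)
    (hpg : β ^ m = ∑ i ∈ Finset.range m, β ^ i)
    (b : ℝ) (hb : b ∈ Set.Ico 0 (1 / (β - 1) - 1))
    (T : ℝ → ℝ) (hT : ∀ x, T x = if x < (b + 1) / β then β * x else β * x - 1)
    (h : ℝ → ℝ)
    (hh : ∀ x, h x = ∑ n ∈ Finset.range m,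
      ((Set.Icc (0 : ℝ) (T^[n] (b + 1))).indicator (fun _ => (1 : ℝ)) x -
        (Set.Icc (0 : ℝ) (T^[n] b)).indicator (fun _ => (1 : ℝ)) x) / β ^ n) :
    (∫ x in (0 : ℝ)..((b + 1) / β), h x) = 1 - ((m : ℝ) - 1) * b ∧
    (∫ x in (0 : ℝ)..(1 / (β - 1)), h x) = ((m : ℝ) * β + β - 2 * m) / (β - 1) ∧
    (∫ x in (0 : ℝ)..((b + 1) / β), h x) / (∫ x in (0 : ℝ)..(1 / (β - 1)), h x) =
      (β - 1) * (1 - ((m : ℝ) - 1) * b) / ((m : ℝ) * β + β - 2 * m) := by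
  obtain ⟨hβ1, -⟩ := hβ
  obtain ⟨hb0, hb⟩ := hb
  have hβm := pow_mul_two_sub_eq_one_of_pow_eq_geom_sum hpg
  have hb' : (b + 1) * (β - 1) < 1 := by
    rwa [lt_sub_iff_add_lt, lt_div_iff₀ (by linarith)] at hb
  have hlow : ∀ n < m, T^[n] b = β ^ n * b := fun n hn =>
    iterate_eq_pow_mul_of_forall_lt (fun y hy => by rw [hT, if_pos hy])
      fun k hk => pow_mul_lt_div_of_lt hβ1 hβm hb0 hb' (hk.trans hn)
  have hup : ∀ n < m, T^[n] (b + 1) = 1 / (β - 1) + β ^ n * (b + 1 - 1 / (β - 1)) :=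
    fun n hn => iterate_eq_add_pow_mul_of_forall_le hβ1.ne'
      (fun y hy => by rw [hT, if_neg hy.not_gt])
      fun k hk => div_le_add_pow_mul_of_lt hβ1 hβm hb0 hb' (hk.trans hn)
  have hI : ∀ c, 0 ≤ c → ∫ x in (0 : ℝ)..c, h x = ∑ n ∈ range m,
      (min (1 / (β - 1) + β ^ n * (b + 1 - 1 / (β - 1))) c - min (β ^ n * b) c) / β ^ n := by
    intro c hc
    simp only [hh]
    rw [intervalIntegral_sum_indicator_Icc_sub _ _ _ _ (fun n hn => ?_) (fun n hn => ?_) hc]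
    · exact sum_congr rfl fun n hn => by rw [hup n (mem_range.1 hn), hlow n (mem_range.1 hn)]
    · rw [hup n (mem_range.1 hn)]
      exact (div_nonneg (by linarith) (by linarith)).trans
        (div_le_add_pow_mul_of_lt hβ1 hβm hb0 hb' (mem_range.1 hn))
    · rw [hlow n (mem_range.1 hn)]
      positivity
  have I1 := (hI _ (by positivity)).trans (sum_range_min_div_pow_breakpoint hβ1 hpg hb0 hb')
  have I2 := (hI _ (by positivity)).trans (sum_range_min_div_pow_fixedPoint hβ1 hpg hb0 hb')
  refine ⟨I1, I2, ?_⟩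
  rw [I1, I2, div_div_eq_mul_div, mul_comm]

theorem stmt18 (β : ℝ) (m : ℕ) (hm : 2 ≤ m) (hβ : β ∈ Set.Ioo (1 : ℝ) 2)
    (hpg : β ^ m = ∑ i ∈ Finset.range m, β ^ i)
    (b : ℝ) (hb : b ∈ Set.Ico 0 (1 / (β - 1) - 1))
    (T : ℝ → ℝ) (hT : ∀ x, T x = if x < (b + 1) / β then β * x else β * x - 1)
    (h : ℝ → ℝ)
    (hh : ∀ x, h x = ∑ n ∈ Finset.range m,
      ((Set.Icc (0 : ℝ) (T^[n] (b + 1))).indicator (fun _ => (1 : ℝ)) x -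
        (Set.Icc (0 : ℝ) (T^[n] b)).indicator (fun _ => (1 : ℝ)) x) / β ^ n) :
    (∫ x in (0 : ℝ)..((b + 1) / β), h x) = 1 - ((m : ℝ) - 1) * b ∧
    (∫ x in (0 : ℝ)..(1 / (β - 1)), h x) = ((m : ℝ) * β + β - 2 * m) / (β - 1) ∧
    (∫ x in (0 : ℝ)..((b + 1) / β), h x) / (∫ x in (0 : ℝ)..(1 / (β - 1)), h x) =
      (β - 1) * (1 - ((m : ℝ) - 1) * b) / ((m : ℝ) * β + β - 2 * m) :=
  stmt18_general β m hβ hpg b hb T hT h hh
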